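/- Let A be a distributive nearlattice and for a filter F define σ(F) = {x ∈ A : x⊤ ⋎ F = A}. Then A is Stone if and only if every α-filter F satisfies σ(F) = F. -/
import Mathlib


/-- A distributive nearlattice, presented (following Araújo–Kinyon) as a
join-semilattice with top together with its canonical ternary operation
`m x y z = (x ⊔ z) ⊓_z (y ⊔ z)` (the meet taken in the principal filter `[z)`),
satisfying the Araújo–Kinyon identities.  This is equivalent to: every
principal filter is a bounded distributive lattice. -/
class DNearlattice (A : Type*) extends SemilatticeSup A, OrderTop A where
  m : A → A → A → A
  sup_eq_m : ∀ x y : A, x ⊔ y = m x x y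
  m_ax2 : ∀ x y : A, m x y x = x
  m_ax3 : ∀ u w x y z : A,
    m (m x y z) (m y (m u x z) z) w = m w w (m y (m x u z) z)
  m_ax4 : ∀ w x y z : A,
    m x (m y y z) w = m (m x y w) (m x y w) (m x z w)

variable {A : Type*} [DNearlattice A]

/-- The annihilator `a⊤ = {x | x ⊔ a = ⊤}`. -/
def ann (a : A) : Set A := {x : A | x ⊔ a = ⊤}

/-- The annihilator of a set (filter): `F⊤ = {x | ∀ f ∈ F, x ⊔ f = ⊤}`. -/
def annF (F : Set A) : Set A := {x : A | ∀ f ∈ F, x ⊔ f = ⊤}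

/-- The double annihilator `a⊤⊤`. -/
def dann (a : A) : Set A := annF (ann a)

/-- A filter: contains `⊤`, is upward closed, and is closed under existing
binary meets (greatest lower bounds). -/
def IsFil (F : Set A) : Prop :=
  ⊤ ∈ F ∧ (∀ a b : A, a ≤ b → a ∈ F → b ∈ F) ∧
    (∀ a b c : A, a ∈ F → b ∈ F → IsGLB {a, b} c → c ∈ F)

/-- The filter generated by a set: the intersection of all filters containing it. -/
def filGen (X : Set A) : Set A := ⋂₀ {F : Set A | IsFil F ∧ X ⊆ F}

/-- The join of two filters in the lattice of filters. -/
def filJoin (F G : Set A) : Set A := filGen (F ∪ G)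

/-- An ideal: downward closed and closed under joins. -/
def IsIdl (I : Set A) : Prop :=
  (∀ a b : A, a ≤ b → b ∈ I → a ∈ I) ∧ (∀ a b : A, a ∈ I → b ∈ I → a ⊔ b ∈ I)

/-- A prime ideal: a nonempty proper ideal such that whenever an existing
meet `a ∧ b` lies in it, `a` or `b` lies in it. -/
def IsPrimeIdl (P : Set A) : Prop :=
  IsIdl P ∧ P.Nonempty ∧ P ≠ Set.univ ∧
    (∀ a b c : A, IsGLB {a, b} c → c ∈ P → a ∈ P ∨ b ∈ P)

/-- A maximal ideal: a nonempty proper ideal maximal among proper ideals. -/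
def IsMaxIdl (I : Set A) : Prop :=
  IsIdl I ∧ I.Nonempty ∧ I ≠ Set.univ ∧
    (∀ J : Set A, IsIdl J → I ⊆ J → J = I ∨ J = Set.univ)

/-- A prime filter: `a ⊔ b ∈ F` implies `a ∈ F` or `b ∈ F`. -/
def IsPrimeFil (F : Set A) : Prop :=
  IsFil F ∧ ∀ a b : A, a ⊔ b ∈ F → a ∈ F ∨ b ∈ F

/-- An α-filter: a filter containing `a⊤⊤` for each of its elements `a`. -/
def IsAlphaFil (F : Set A) : Prop := IsFil F ∧ ∀ a ∈ F, dann a ⊆ F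

/-- An α-ideal: an ideal `I` such that `I ∩ a⊤⊤ ≠ ∅` implies `a ∈ I`. -/
def IsAlphaIdl (I : Set A) : Prop :=
  IsIdl I ∧ ∀ a : A, (I ∩ dann a).Nonempty → a ∈ I

/-- Quasicomplemented: every `a⊤⊤` is of the form `b⊤`. -/
def Quasicomplemented (B : Type*) [DNearlattice B] : Prop :=
  ∀ a : B, ∃ b : B, dann a = ann b

/-- Normal: `(a ⊔ b)⊤ = a⊤ ⋎ b⊤` for all `a, b`. -/
def NormalNL (B : Type*) [DNearlattice B] : Prop :=
  ∀ a b : B, ann (a ⊔ b) = filJoin (ann a) (ann b)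

/-- Stone: `a⊤ ⋎ a⊤⊤ = A` for all `a`. -/
def StoneNL (B : Type*) [DNearlattice B] : Prop :=
  ∀ a : B, filJoin (ann a) (dann a) = Set.univ


namespace DNearAux
open DNearlattice
variable {A : Type*} [DNearlattice A]

lemma msup (x y : A) : m x x y = x ⊔ y := (sup_eq_m x y).symm

lemma mdist (x y z w : A) : m x (y ⊔ z) w = m x y w ⊔ m x z w := by
  rw [← msup y z, m_ax4 w x y z, msup]

-- (3d)-chain: m y z z = z
lemma m_z_z (y z : A) : m y z z = z := by
  -- first: z ≤ m x z z for all x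
  have hle : ∀ x : A, z ≤ m x z z := by
    intro x
    have h := m_ax3 z (m x z z) x z z
    rw [m_ax2 z (m z x z), m_ax2 z (m x z z), m_ax2 (m x z z) z, ← sup_eq_m] at h
    -- h : m x z z = m x z z ⊔ z
    exact le_sup_right.trans h.ge
  -- second: m y z z ≤ z
  have h := m_ax3 z z z y z
  rw [m_ax2 z y, m_ax2 z z, m_ax2 z (m y z z), ← sup_eq_m] at h
  -- h : z = z ⊔ m y z z
  exact le_antisymm (le_sup_right.trans h.ge) (hle y)

-- (L2): m (m x y z) z w = w ⊔ z
lemma mL_z (x y z w : A) : m (m x y z) z w = w ⊔ z := by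
  have h := m_ax3 z w x y z
  rw [m_ax2 z x, m_z_z y z, m_z_z x z, m_z_z y z, ← sup_eq_m] at h
  exact h

lemma z_le_m (x y z : A) : z ≤ m x y z := by
  have h := mL_z x y z (m x y z)
  rw [m_ax2 (m x y z) z] at h
  exact le_sup_right.trans h.ge

lemma m_supr (x y z : A) : m x (y ⊔ z) z = m x y z := by
  rw [mdist, m_z_z, sup_eq_left.mpr (z_le_m x y z)]

lemma m_comm (x y z : A) : m x y z = m y x z := by
  suffices H : ∀ a b c : A, m b a c ≤ m a b c by
    exact le_antisymm (H y x z) (H x y z)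
  intro a b c
  have h := m_ax3 a (m a b c) a b c
  rw [msup a c, m_supr b a c, m_ax2 (m a b c) (m b a c), ← sup_eq_m] at h
  -- h : m a b c = m a b c ⊔ m b a c
  exact le_sup_right.trans h.ge

lemma m_supl (x y z : A) : m (x ⊔ z) y z = m x y z := by
  rw [m_comm (x ⊔ z) y z, m_supr y x z, m_comm]

lemma m_mono_r {y₁ y₂ : A} (h : y₁ ≤ y₂) (x z : A) : m x y₁ z ≤ m x y₂ z := by
  have e : m x y₁ z ⊔ m x y₂ z = m x y₂ z := by
    rw [← mdist, sup_eq_right.mpr h]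
  exact le_sup_left.trans e.le

lemma m_mono_l {x₁ x₂ : A} (h : x₁ ≤ x₂) (y z : A) : m x₁ y z ≤ m x₂ y z := by
  rw [m_comm x₁ y z, m_comm x₂ y z]; exact m_mono_r h y z

-- upper bound: m x u z ≤ x ⊔ z
lemma m_le_left (x u z : A) : m x u z ≤ x ⊔ z := by
  set P := m x u z with hP
  set N := m x P z with hN
  -- step 1: N ≤ x ⊔ z
  have h3 := m_ax3 u (x ⊔ z) x x z
  rw [msup x z, m_comm u x z, ← hP, ← hN, m_ax2 (x ⊔ z) N, ← sup_eq_m] at h3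
  -- h3 : x ⊔ z = (x ⊔ z) ⊔ N
  have hNle : N ≤ x ⊔ z := le_sup_right.trans h3.ge
  -- step 2: P ≤ N
  have h4 := m_ax3 u N x P z
  rw [m_comm u x z, ← hP, show m P P z = P ⊔ z from msup P z,
      sup_eq_left.mpr (z_le_m x u z), ← hN, m_ax2 N P, ← sup_eq_m] at h4
  -- h4 : N = N ⊔ P
  exact (le_sup_right.trans h4.ge).trans hNle

lemma m_le_right (x u z : A) : m x u z ≤ u ⊔ z := by
  rw [m_comm]; exact m_le_left u x z

lemma sup_le_m {w x y z : A} (h1 : w ≤ x ⊔ z) (h2 : w ≤ y ⊔ z) : w ⊔ z ≤ m x y z := by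
  have e1 : m w y z ≤ m x y z := by
    have := m_mono_l h1 y z
    rwa [m_supl x y z] at this
  have e2 : w ⊔ z ≤ m w y z := by
    have := m_mono_r h2 w z
    rwa [msup w z, m_supr w y z] at this
  exact e2.trans e1

lemma isGLB_m (x y z : A) : IsGLB {x ⊔ z, y ⊔ z} (m x y z) := by
  constructor
  · rintro t (rfl | rfl)
    · exact m_le_left x y z
    · exact m_le_right x y z
  · intro w hw
    have h1 : w ≤ x ⊔ z := hw (Set.mem_insert _ _)
    have h2 : w ≤ y ⊔ z := hw (Set.mem_insert_of_mem _ rfl)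
    exact le_sup_left.trans (sup_le_m h1 h2)

end DNearAux

section DNearAux2
open DNearlattice DNearAux
variable {A : Type*} [DNearlattice A]

lemma isGLB_sup' {a b c : A} (h : IsGLB {a, b} c) (f : A) :
    IsGLB {a ⊔ f, b ⊔ f} (c ⊔ f) := by
  have hca : c ≤ a := h.1 (Set.mem_insert _ _)
  have hcb : c ≤ b := h.1 (Set.mem_insert_of_mem _ rfl)
  have hmabc : m a b c = c := by
    have h1 : m a b c ≤ a := (m_le_left a b c).trans_eq (sup_eq_left.mpr hca)
    have h2 : m a b c ≤ b := (m_le_right a b c).trans_eq (sup_eq_left.mpr hcb)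
    refine le_antisymm (h.2 ?_) (z_le_m a b c)
    rintro t (rfl | rfl)
    · exact h1
    · exact h2
  constructor
  · rintro t (rfl | rfl)
    · exact sup_le_sup_right hca f
    · exact sup_le_sup_right hcb f
  · intro w hw
    have hwa : w ≤ a ⊔ f := hw (Set.mem_insert _ _)
    have hwb : w ≤ b ⊔ f := hw (Set.mem_insert_of_mem _ rfl)
    have hwG : w ≤ m (a ⊔ f) (b ⊔ f) c := by
      have e1 : w ≤ (a ⊔ f) ⊔ c := hwa.trans le_sup_left
      have e2 : w ≤ (b ⊔ f) ⊔ c := hwb.trans le_sup_left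
      exact le_sup_left.trans (sup_le_m e1 e2)
    have hG : m (a ⊔ f) (b ⊔ f) c ≤ c ⊔ f := by
      rw [mdist]
      have t1 : m (a ⊔ f) f c ≤ c ⊔ f := by
        have := m_le_right (a ⊔ f) f c
        exact this.trans (by rw [sup_comm])
      have t2 : m (a ⊔ f) b c ≤ c ⊔ f := by
        rw [m_comm, mdist, m_comm b a c, hmabc]
        have := m_le_right b f c
        refine sup_le le_sup_left (this.trans ?_)
        rw [sup_comm]
      exact sup_le t2 t1
    exact hwG.trans hG

lemma isFil_annF (S : Set A) : IsFil (annF S) := by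
  refine ⟨fun f hf => top_sup_eq f, ?_, ?_⟩
  · intro a b hab ha f hf
    exact eq_top_iff.mpr ((ha f hf).symm.le.trans (sup_le_sup_right hab f))
  · intro a b c ha hb hglb f hf
    have h := isGLB_sup' hglb f
    refine eq_top_iff.mpr (h.2 ?_)
    rintro t (rfl | rfl)
    · exact (ha f hf).ge
    · exact (hb f hf).ge

lemma filGen_subset {X F : Set A} (hF : IsFil F) (hX : X ⊆ F) : filGen X ⊆ F :=
  fun _ hx => hx F ⟨hF, hX⟩

lemma filGen_mono {X Y : Set A} (h : X ⊆ Y) : filGen X ⊆ filGen Y :=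
  fun x hx => Set.mem_sInter.mpr fun F hF => hx F ⟨hF.1, h.trans hF.2⟩

lemma sigma_subset {F : Set A} (hF : IsFil F) {x : A}
    (hx : filJoin (ann x) F = Set.univ) : x ∈ F := by
  set H : Set A := {y | y ⊔ x ∈ F} with hHdef
  have hH : IsFil H := by
    refine ⟨?_, ?_, ?_⟩
    · show ⊤ ⊔ x ∈ F
      rw [top_sup_eq]; exact hF.1
    · intro a b hab ha
      exact hF.2.1 (a ⊔ x) (b ⊔ x) (sup_le_sup_right hab x) ha
    · intro a b c ha hb hglb
      exact hF.2.2 (a ⊔ x) (b ⊔ x) (c ⊔ x) ha hb (isGLB_sup' hglb x)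
  have hsub : ann x ∪ F ⊆ H := by
    rintro y (hy | hy)
    · show y ⊔ x ∈ F
      rw [show y ⊔ x = ⊤ from hy]; exact hF.1
    · exact hF.2.1 y (y ⊔ x) le_sup_left hy
  have hxJ : x ∈ filJoin (ann x) F := by rw [hx]; exact Set.mem_univ x
  have hxH : x ∈ H := filGen_subset hH hsub hxJ
  have hxx : x ⊔ x ∈ F := hxH
  rwa [sup_idem] at hxx

end DNearAux2

/-- `A` is Stone iff every α-filter `F` is a σ-filter, i.e.
`σ(F) = {x | x⊤ ⋎ F = A}` equals `F`. -/
theorem stmt19 :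
    StoneNL A ↔
      ∀ F : Set A, IsAlphaFil F →
        {x : A | filJoin (ann x) F = Set.univ} = F := by
  constructor
  · intro hStone F hF
    ext x
    simp only [Set.mem_setOf_eq]
    constructor
    · exact fun h => sigma_subset hF.1 h
    · intro hxF
      have h1 : dann x ⊆ F := hF.2 x hxF
      have h2 : filJoin (ann x) (dann x) ⊆ filJoin (ann x) F :=
        filGen_mono (Set.union_subset_union_right _ h1)
      rw [hStone x] at h2
      exact Set.univ_subset_iff.mp h2
  · intro h a
    have hfil : IsAlphaFil (dann a) := by
      refine ⟨isFil_annF _, ?_⟩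
      intro b hb c hc f hf
      refine hc f ?_
      show f ⊔ b = ⊤
      rw [sup_comm]
      exact hb f hf
    have ha : a ∈ dann a := by
      intro f hf
      rw [sup_comm]
      exact hf
    exact (Set.ext_iff.mp (h (dann a) hfil) a).mpr ha
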